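/- Let e ∈ H be a unitary tripotent of the spin factor ({e,e,x} = x for all x ∈ H) and let z ∈ H satisfy ‖z‖_sp = 1, ‖e + z‖_sp = 2 and ‖e − z‖_sp = 2. Then {e,z,e} = z, ⟨z|e⟩ = 0, and z is itself a unitary tripotent, i.e. {z,z,x} = x for all x ∈ H. -/

import Mathlib

open scoped InnerProductSpace

/-- The inner product `⟨x|y⟩` of the paper: linear in `x`, conjugate-linear in `y`
(Mathlib's `⟪·,·⟫_ℂ` is conjugate-linear in the first variable). -/
noncomputable def sip {H : Type*} [NormedAddCommGroup H] [InnerProductSpace ℂ H]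
    (x y : H) : ℂ := ⟪y, x⟫_ℂ

/-- The spin factor triple product `{x,y,z} = ⟨x|y⟩z + ⟨z|y⟩x − ⟨x|Jz⟩Jy`
associated with a conjugation `J`. -/
noncomputable def tp {H : Type*} [NormedAddCommGroup H] [InnerProductSpace ℂ H]
    (J : H → H) (x y z : H) : H :=
  sip x y • z + sip z y • x - sip x (J z) • J y

/-- The spin norm `‖x‖_sp = √(⟨x|x⟩ + √(⟨x|x⟩² − |⟨x|Jx⟩|²))`. -/
noncomputable def spNorm {H : Type*} [NormedAddCommGroup H] [InnerProductSpace ℂ H]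
    (J : H → H) (x : H) : ℝ :=
  Real.sqrt ((sip x x).re + Real.sqrt ((sip x x).re ^ 2 - ‖sip x (J x)‖ ^ 2))

/-!
Since `‖x‖² ≤ ‖x‖_sp² ≤ 2‖x‖²`, with equality on the right exactly when `⟪J x, x⟫ = 0`, the
three spin norms together with the parallelogram law force `‖z‖ = 1` and
`⟪J (e ± z), e ± z⟫ = 0`. Expanding the symmetric form `(x, y) ↦ ⟪J x, y⟫` then gives
`⟪J e, z⟫ = 0` and `⟪J z, z⟫ = -⟪J e, e⟫`. Unitary tripotents are exactly the unit vectors `x`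
with `‖⟪J x, x⟫‖ = 1`, i.e. those with `J x` a unimodular multiple of `x` (the equality case of
Cauchy–Schwarz), so `z` is unitary; and as `J e` is a multiple of `e`, `⟪e, z⟫ = 0`, after which
`{e, z, e} = z` is a direct computation.
-/

open scoped ComplexConjugate

theorem Complex.mul_conj_eq_one_of_norm_eq_one {q : ℂ} (hq : ‖q‖ = 1) : q * conj q = 1 := by
  rw [Complex.mul_conj', hq]
  norm_num

namespace SpinFactor

variable {H : Type*} [NormedAddCommGroup H] [InnerProductSpace ℂ H] {J : H → H}

theorem map_neg_of_map_smul (hJsmul : ∀ (c : ℂ) (x : H), J (c • x) = conj c • J x) (x : H) :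
    J (-x) = -J x := by
  simpa using hJsmul (-1) x

theorem map_sub_of_map_add (hJadd : ∀ x y : H, J (x + y) = J x + J y)
    (hJsmul : ∀ (c : ℂ) (x : H), J (c • x) = conj c • J x) (x y : H) :
    J (x - y) = J x - J y := by
  rw [sub_eq_add_neg, hJadd, map_neg_of_map_smul hJsmul, sub_eq_add_neg]

theorem re_inner_map_map (hJadd : ∀ x y : H, J (x + y) = J x + J y)
    (hJsmul : ∀ (c : ℂ) (x : H), J (c • x) = conj c • J x)
    (hJiso : ∀ x : H, ‖J x‖ = ‖x‖) (x y : H) : (⟪J x, J y⟫_ℂ).re = (⟪x, y⟫_ℂ).re := by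
  simp only [← RCLike.re_to_complex,
    re_inner_eq_norm_add_mul_self_sub_norm_sub_mul_self_div_four]
  rw [← hJadd, ← map_sub_of_map_add hJadd hJsmul, hJiso, hJiso]

theorem inner_map_map (hJadd : ∀ x y : H, J (x + y) = J x + J y)
    (hJsmul : ∀ (c : ℂ) (x : H), J (c • x) = conj c • J x)
    (hJiso : ∀ x : H, ‖J x‖ = ‖x‖) (x y : H) : ⟪J x, J y⟫_ℂ = ⟪y, x⟫_ℂ := by
  have hre := re_inner_map_map hJadd hJsmul hJiso
  apply Complex.ext
  · rw [hre, ← inner_conj_symm, Complex.conj_re]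
  · have hI := hre x (Complex.I • y)
    rw [hJsmul, inner_smul_right, inner_smul_right] at hI
    rw [← inner_conj_symm y x, Complex.conj_im]
    simpa using hI

theorem inner_map_comm (hJadd : ∀ x y : H, J (x + y) = J x + J y)
    (hJsmul : ∀ (c : ℂ) (x : H), J (c • x) = conj c • J x)
    (hJiso : ∀ x : H, ‖J x‖ = ‖x‖) (hJinv : ∀ x : H, J (J x) = x) (x y : H) :
    ⟪J x, y⟫_ℂ = ⟪J y, x⟫_ℂ := by
  simpa [hJinv] using inner_map_map hJadd hJsmul hJiso x (J y)

theorem inner_map_add_self (hJadd : ∀ x y : H, J (x + y) = J x + J y)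
    (hJsmul : ∀ (c : ℂ) (x : H), J (c • x) = conj c • J x)
    (hJiso : ∀ x : H, ‖J x‖ = ‖x‖) (hJinv : ∀ x : H, J (J x) = x) (x y : H) :
    ⟪J (x + y), x + y⟫_ℂ = ⟪J x, x⟫_ℂ + ⟪J y, y⟫_ℂ + 2 * ⟪J x, y⟫_ℂ := by
  rw [hJadd, inner_add_left, inner_add_right, inner_add_right,
    inner_map_comm hJadd hJsmul hJiso hJinv y x]
  ring

theorem inner_map_sub_self (hJadd : ∀ x y : H, J (x + y) = J x + J y)
    (hJsmul : ∀ (c : ℂ) (x : H), J (c • x) = conj c • J x)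
    (hJiso : ∀ x : H, ‖J x‖ = ‖x‖) (hJinv : ∀ x : H, J (J x) = x) (x y : H) :
    ⟪J (x - y), x - y⟫_ℂ = ⟪J x, x⟫_ℂ + ⟪J y, y⟫_ℂ - 2 * ⟪J x, y⟫_ℂ := by
  rw [map_sub_of_map_add hJadd hJsmul, inner_sub_left, inner_sub_right, inner_sub_right,
    inner_map_comm hJadd hJsmul hJiso hJinv y x]
  ring

theorem norm_inner_map_self_le (hJiso : ∀ x : H, ‖J x‖ = ‖x‖) (x : H) :
    ‖⟪J x, x⟫_ℂ‖ ≤ ‖x‖ ^ 2 := by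
  simpa [hJiso, sq] using norm_inner_le_norm (𝕜 := ℂ) (J x) x

theorem map_eq_smul_of_norm_inner_map_self (hJiso : ∀ x : H, ‖J x‖ = ‖x‖) {x : H}
    (hx : ‖x‖ = 1) (hq : ‖⟪J x, x⟫_ℂ‖ = 1) : J x = conj ⟪J x, x⟫_ℂ • x := by
  have hre : (conj ⟪J x, x⟫_ℂ * ⟪J x, x⟫_ℂ).re = 1 := by
    rw [mul_comm, Complex.mul_conj_eq_one_of_norm_eq_one hq, Complex.one_re]
  have : ‖J x - conj ⟪J x, x⟫_ℂ • x‖ ^ 2 = 0 := by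
    rw [norm_sub_sq (𝕜 := ℂ), inner_smul_right, RCLike.re_to_complex, hre, norm_smul, hJiso,
      hx, RCLike.norm_conj, hq]
    norm_num
  simpa [sub_eq_zero] using this

theorem re_sip_self (x : H) : (sip x x).re = ‖x‖ ^ 2 := by
  rw [sip, ← RCLike.re_to_complex, inner_self_eq_norm_sq]

variable (J) in
theorem spNorm_sq (x : H) :
    spNorm J x ^ 2 = ‖x‖ ^ 2 + √((‖x‖ ^ 2) ^ 2 - ‖⟪J x, x⟫_ℂ‖ ^ 2) := by
  rw [spNorm, re_sip_self, Real.sq_sqrt (by positivity)]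
  rfl

variable (J) in
theorem norm_sq_le_spNorm_sq (x : H) : ‖x‖ ^ 2 ≤ spNorm J x ^ 2 := by
  rw [spNorm_sq]
  exact le_add_of_nonneg_right (Real.sqrt_nonneg _)

variable (J) in
theorem spNorm_sq_le (x : H) : spNorm J x ^ 2 ≤ 2 * ‖x‖ ^ 2 := by
  have : √((‖x‖ ^ 2) ^ 2 - ‖⟪J x, x⟫_ℂ‖ ^ 2) ≤ ‖x‖ ^ 2 :=
    (Real.sqrt_le_sqrt (sub_le_self _ (sq_nonneg _))).trans_eq (Real.sqrt_sq (by positivity))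
  rw [spNorm_sq]
  linarith

theorem inner_map_self_eq_zero_of_spNorm_sq (hJiso : ∀ x : H, ‖J x‖ = ‖x‖) {x : H}
    (h : 2 * ‖x‖ ^ 2 ≤ spNorm J x ^ 2) : ⟪J x, x⟫_ℂ = 0 := by
  have hcs := norm_inner_map_self_le hJiso x
  have hsqrt : ‖x‖ ^ 2 ≤ √((‖x‖ ^ 2) ^ 2 - ‖⟪J x, x⟫_ℂ‖ ^ 2) := by
    rw [spNorm_sq] at h
    linarith
  rw [Real.le_sqrt (by positivity) (by nlinarith [norm_nonneg ⟪J x, x⟫_ℂ])] at hsqrt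
  have : ‖⟪J x, x⟫_ℂ‖ ^ 2 = 0 := by nlinarith [norm_nonneg ⟪J x, x⟫_ℂ]
  simpa using this

theorem norm_eq_one_and_inner_map_self_eq_zero (hJiso : ∀ x : H, ‖J x‖ = ‖x‖) {e z : H}
    (he : ‖e‖ = 1) (hz : spNorm J z = 1) (hplus : spNorm J (e + z) = 2)
    (hminus : spNorm J (e - z) = 2) :
    ‖z‖ = 1 ∧ ⟪J (e + z), e + z⟫_ℂ = 0 ∧ ⟪J (e - z), e - z⟫_ℂ = 0 := by
  have hz_le := norm_sq_le_spNorm_sq J z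
  have hplus_le := spNorm_sq_le J (e + z)
  have hminus_le := spNorm_sq_le J (e - z)
  have hpar := parallelogram_law_with_norm ℂ e z
  rw [hz] at hz_le
  rw [hplus] at hplus_le
  rw [hminus] at hminus_le
  rw [he] at hpar
  refine ⟨?_, inner_map_self_eq_zero_of_spNorm_sq hJiso ?_,
    inner_map_self_eq_zero_of_spNorm_sq hJiso ?_⟩
  · exact (pow_eq_one_iff_of_nonneg (norm_nonneg z) two_ne_zero).1 (by linarith)
  · rw [hplus]; linarith
  · rw [hminus]; linarith

def IsUnitaryTripotent (J : H → H) (e : H) : Prop :=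
  ∀ x, tp J e e x = x

variable (J) in
theorem tp_self_self (e x : H) :
    tp J e e x = ⟪e, e⟫_ℂ • x + ⟪e, x⟫_ℂ • e - ⟪J x, e⟫_ℂ • J e :=
  rfl

theorem IsUnitaryTripotent.ne_zero [Nontrivial H] {e : H} (he : IsUnitaryTripotent J e) :
    e ≠ 0 := by
  rintro rfl
  obtain ⟨x, hx⟩ := exists_ne (0 : H)
  exact hx (by simpa [tp_self_self] using (he x).symm)

theorem IsUnitaryTripotent.map_eq_smul (hJinv : ∀ x : H, J (J x) = x) {e : H}
    (he : IsUnitaryTripotent J e) : J e = conj ⟪J e, e⟫_ℂ • e := by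
  have := he (J e)
  rwa [tp_self_self, hJinv, add_sub_cancel_left, eq_comm, ← inner_conj_symm] at this

theorem IsUnitaryTripotent.norm_inner_map_self [Nontrivial H]
    (hJiso : ∀ x : H, ‖J x‖ = ‖x‖) (hJinv : ∀ x : H, J (J x) = x) {e : H}
    (he : IsUnitaryTripotent J e) : ‖⟪J e, e⟫_ℂ‖ = 1 := by
  have := hJiso e
  rwa [he.map_eq_smul hJinv, norm_smul, mul_eq_right₀ (norm_ne_zero_iff.2 he.ne_zero),
    RCLike.norm_conj] at this

theorem IsUnitaryTripotent.norm_eq_one [Nontrivial H] (hJiso : ∀ x : H, ‖J x‖ = ‖x‖)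
    (hJinv : ∀ x : H, J (J x) = x) {e : H} (he : IsUnitaryTripotent J e) : ‖e‖ = 1 := by
  have hJe := he.map_eq_smul hJinv
  have hqq := Complex.mul_conj_eq_one_of_norm_eq_one (he.norm_inner_map_self hJiso hJinv)
  set q := ⟪J e, e⟫_ℂ
  have hee : (2 * ⟪e, e⟫_ℂ - 2) • e = 0 := by
    have : ⟪e, e⟫_ℂ • e + ⟪e, e⟫_ℂ • e - q • J e = e := he e
    rw [hJe] at this
    linear_combination (norm := module) this + hqq • e
  have hee : ⟪e, e⟫_ℂ = 1 := by
    linear_combination (smul_eq_zero.1 hee).resolve_right he.ne_zero / 2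
  have := re_sip_self e
  rw [sip, hee, Complex.one_re, eq_comm] at this
  exact (pow_eq_one_iff_of_nonneg (norm_nonneg e) two_ne_zero).1 this

theorem isUnitaryTripotent_of_norm_eq_one (hJadd : ∀ x y : H, J (x + y) = J x + J y)
    (hJsmul : ∀ (c : ℂ) (x : H), J (c • x) = conj c • J x)
    (hJiso : ∀ x : H, ‖J x‖ = ‖x‖) (hJinv : ∀ x : H, J (J x) = x) {e : H}
    (he : ‖e‖ = 1) (hq : ‖⟪J e, e⟫_ℂ‖ = 1) : IsUnitaryTripotent J e := by
  intro x
  rw [tp_self_self, inner_map_comm hJadd hJsmul hJiso hJinv x,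
    map_eq_smul_of_norm_inner_map_self hJiso he hq, inner_smul_left, Complex.conj_conj,
    smul_smul, inner_self_eq_one_of_norm_eq_one he]
  linear_combination (norm := module) (-⟪e, x⟫_ℂ) • Complex.mul_conj_eq_one_of_norm_eq_one hq • e

end SpinFactor

open SpinFactor in
/-- If `e` is a unitary tripotent of the spin factor and `z` is a norm-one element with
`‖e + z‖_sp = ‖e − z‖_sp = 2`, then `z` lies in the self-adjoint part of the Peirce-2
space of `e`, is `⟨·|·⟩`-orthogonal to `e`, and is itself a unitary tripotent. -/
theorem stmt13 {H : Type*} [NormedAddCommGroup H] [InnerProductSpace ℂ H]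
    (J : H → H)
    (hJadd : ∀ x y : H, J (x + y) = J x + J y)
    (hJsmul : ∀ (c : ℂ) (x : H), J (c • x) = (starRingEnd ℂ) c • J x)
    (hJiso : ∀ x : H, ‖J x‖ = ‖x‖)
    (hJinv : ∀ x : H, J (J x) = x)
    (e : H) (he : ∀ x : H, tp J e e x = x)
    (z : H) (hz : spNorm J z = 1)
    (hplus : spNorm J (e + z) = 2) (hminus : spNorm J (e - z) = 2) :
    tp J e z e = z ∧ sip z e = 0 ∧ ∀ x : H, tp J z z x = x := by
  rcases subsingleton_or_nontrivial H with hH | hH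
  · exact ⟨Subsingleton.elim _ _, by simp [sip, Subsingleton.elim z 0],
      fun _ => Subsingleton.elim _ _⟩
  replace he : IsUnitaryTripotent J e := he
  have he1 := he.norm_eq_one hJiso hJinv
  have hc := he.norm_inner_map_self hJiso hJinv
  obtain ⟨hz1, hqplus, hqminus⟩ :=
    norm_eq_one_and_inner_map_self_eq_zero hJiso he1 hz hplus hminus
  rw [inner_map_add_self hJadd hJsmul hJiso hJinv] at hqplus
  rw [inner_map_sub_self hJadd hJsmul hJiso hJinv] at hqminus
  have hJez : ⟪J e, z⟫_ℂ = 0 := by linear_combination (hqplus - hqminus) / 4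
  have hqz : ⟪J z, z⟫_ℂ = -⟪J e, e⟫_ℂ := by linear_combination (hqplus + hqminus) / 2
  have hqz_norm : ‖⟪J z, z⟫_ℂ‖ = 1 := by rw [hqz, norm_neg, hc]
  have hez : ⟪e, z⟫_ℂ = 0 := by
    rw [he.map_eq_smul hJinv, inner_smul_left, Complex.conj_conj] at hJez
    exact (mul_eq_zero.1 hJez).resolve_left (norm_ne_zero_iff.1 (by simp [hc]))
  refine ⟨?_, hez, isUnitaryTripotent_of_norm_eq_one hJadd hJsmul hJiso hJinv hz1 hqz_norm⟩
  have hze : sip e z = 0 := by rw [sip, ← inner_conj_symm, hez, map_zero]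
  change sip e z • e + sip e z • e - ⟪J e, e⟫_ℂ • J z = z
  rw [hze, map_eq_smul_of_norm_inner_map_self hJiso hz1 hqz_norm, hqz, map_neg]
  linear_combination (norm := module) Complex.mul_conj_eq_one_of_norm_eq_one hc • z
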